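/- Let p = 2^m − δ be prime, μ < m a positive integer with δ < 2^μ − 1, and k a positive integer with 2^k ≤ p. Let X and X′ be distinct binary strings of lengths L ≥ L′ ≥ 0 (both < 2^{m−1}), α ∈ Z_{2^μ}, and ℓ = ⌈L/n⌉. If τ is chosen uniformly from k-bit strings, then Pr[c-decBRWHash_τ(X) − c-decBRWHash_τ(X′) = α] ≤ (2ℓ+1)·2^{m−k−μ+1} when c = 1, and Pr[c-decBRWHash_τ(X) − c-decBRWHash_τ(X′) = α] < (2ℓ+2c+1)·2^{m−k−μ+1} when c > 1. -/

import Mathlib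

/-- The (big-endian) numerical value of a bit string. -/
def blockVal (b : List Bool) : ℕ :=
  b.foldl (fun acc bit => 2 * acc + bit.toNat) 0

/-- The polynomial `Q(x; M_1,…,M_ℓ, bin_{m−1}(L))` of the `c-decBRWHash` construction. -/
noncomputable def decQ (p n c : ℕ) (BRW : List (ZMod p) → Polynomial (ZMod p)) (X : List Bool) :
    Polynomial (ZMod p) :=
  let L := X.length
  let ℓ := (L + n - 1) / n
  let nn := (ℓ + c - 1) / c
  let d := if L = 0 then 1 else 2 ^ (Nat.log 2 nn + 1)
  let Qsum := ∑ j ∈ Finset.range c, Polynomial.X ^ ((c - 1 - j) * d) *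
      BRW ((List.range nn).map fun i =>
        ((blockVal ((X.drop (n * (c * i + j))).take n) : ℕ) : ZMod p))
  Polynomial.X * (Polynomial.X * Qsum + Polynomial.C (L : ZMod p))

/-- `c-decBRWHash_τ(X) = ((Q(τ) mod p) mod 2^μ) ∈ Z_{2^μ}`. -/
noncomputable def decBRWHash (p μ n c : ℕ) (BRW : List (ZMod p) → Polynomial (ZMod p))
    (τ : ZMod p) (X : List Bool) : ZMod (2 ^ μ) :=
  (((decQ p n c BRW X).eval τ).val : ZMod (2 ^ μ))

/-!
`Q_X` determines `X`: its coefficient of `x` is `L`, the lanes `Q_j` sit in disjoint windows of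
`d` consecutive degrees, and a BRW polynomial determines its list of blocks because along the
recursion the left factor is monic of known degree. Hence `D = Q_X - Q_X'` is a nonzero polynomial
without constant term, of degree at most `2ℓ + 2c - 1`. If the two hashes differ by `α`, then
`D(τ) ≡ w (mod p)` for an integer `w ∈ (-p, p)` with `w ≡ α (mod 2^μ)`; there are at most
`2^(m+1-μ)` such `w`, and `D` takes each value at most `deg D` times.
-/

open Polynomial Finset

theorem List.eq_take_append_getD_cons_drop {α : Type*} (l : List α) {i : ℕ} (hi : i < l.length)
    (d : α) : l = l.take i ++ l.getD i d :: l.drop (i + 1) := by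
  rw [List.getD_eq_getElem _ _ hi, ← List.drop_eq_getElem_cons hi, List.take_append_drop]

theorem Nat.lt_add_sub_one_div {a b k : ℕ} (ha : 0 < a) (h : a * k < b) : k < (b + a - 1) / a :=
  (Nat.le_div_iff_mul_le ha).2 (by rw [add_one_mul, mul_comm]; omega)

theorem ZMod.natCast_injOn_Iio (p : ℕ) : Set.InjOn (fun t : ℕ => (t : ZMod p)) (Set.Iio p) :=
  fun a ha b hb hab => by
    simpa [Nat.mod_eq_of_lt ha, Nat.mod_eq_of_lt hb] using
      (ZMod.natCast_eq_natCast_iff' a b p).1 hab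

theorem Int.card_filter_Ico_intCast_eq_le (a : ℤ) (M q : ℕ) (α : ZMod M) :
    #{w ∈ Ico a (a + M * q) | ((w : ℤ) : ZMod M) = α} ≤ q := by
  -- within a residue class modulo `M`, `w` is determined by `(w - a) / M`
  calc #{w ∈ Ico a (a + M * q) | ((w : ℤ) : ZMod M) = α} ≤ #(Finset.range q) := by
        refine card_le_card_of_injOn (fun w => ((w - a) / M).toNat) (fun w hw => ?_) ?_
        · simp only [coe_filter, mem_Ico, Set.mem_ofPred_eq] at hw
          have hM : (0 : ℤ) < M := by nlinarith
          simp only [coe_range, Set.mem_Iio]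
          have := (Int.ediv_lt_iff_lt_mul hM).2 (by linarith : w - a < q * M)
          have := Int.ediv_nonneg (by linarith : 0 ≤ w - a) hM.le
          omega
        · intro w₁ hw₁ w₂ hw₂ he
          simp only [coe_filter, mem_Ico, Set.mem_ofPred_eq] at hw₁ hw₂
          have hmod : (w₁ - a) % M = (w₂ - a) % M :=
            Int.ModEq.sub_right a ((ZMod.intCast_eq_intCast_iff _ _ _).1 (hw₁.2.trans hw₂.2.symm))
          have hdiv : (w₁ - a) / M = (w₂ - a) / M := by
            have := Int.ediv_nonneg (by linarith : 0 ≤ w₁ - a) (Int.natCast_nonneg M)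
            have := Int.ediv_nonneg (by linarith : 0 ≤ w₂ - a) (Int.natCast_nonneg M)
            simp only at he
            omega
          have h₁ := Int.mul_ediv_add_emod (w₁ - a) M
          have h₂ := Int.mul_ediv_add_emod (w₂ - a) M
          rw [hmod, hdiv] at h₁
          linarith
    _ = q := Finset.card_range q

namespace Polynomial

variable {R : Type*}

theorem eq_and_eq_of_mul_X_pow_add_eq [Ring R] {A A' Q Q' : R[X]} {d : ℕ}
    (hQ : Q.natDegree < d) (hQ' : Q'.natDegree < d) (h : A * X ^ d + Q = A' * X ^ d + Q') :
    A = A' ∧ Q = Q' := by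
  have hA : A = A' := by
    ext i
    simpa [coeff_mul_X_pow, coeff_eq_zero_of_natDegree_lt (hQ.trans_le (Nat.le_add_left d i)),
      coeff_eq_zero_of_natDegree_lt (hQ'.trans_le (Nat.le_add_left d i))]
      using congrArg (coeff · (i + d)) h
  exact ⟨hA, add_left_cancel (hA ▸ h)⟩

theorem eq_of_sum_X_pow_mul_eq [CommRing R] {P P' : ℕ → R[X]} {d : ℕ}
    (hP : ∀ i, (P i).natDegree < d) (hP' : ∀ i, (P' i).natDegree < d) {c : ℕ}
    (h : ∑ i ∈ range c, X ^ ((c - 1 - i) * d) * P i =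
      ∑ i ∈ range c, X ^ ((c - 1 - i) * d) * P' i) :
    ∀ i < c, P i = P' i := by
  induction c with
  | zero => simp
  | succ c ih =>
    have hsplit (Q : ℕ → R[X]) : ∑ i ∈ range (c + 1), X ^ ((c + 1 - 1 - i) * d) * Q i =
        (∑ i ∈ range c, X ^ ((c - 1 - i) * d) * Q i) * X ^ d + Q c := by
      rw [sum_range_succ, sum_mul, Nat.add_sub_cancel, Nat.sub_self, zero_mul, pow_zero, one_mul]
      congr 1
      refine sum_congr rfl fun i hi => ?_
      have : c - 1 - i + 1 = c - i := by grind
      rw [mul_right_comm, ← pow_add, ← add_one_mul, this]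
    rw [hsplit, hsplit] at h
    obtain ⟨hlow, htop⟩ := eq_and_eq_of_mul_X_pow_add_eq (hP c) (hP' c) h
    intro i hi
    rcases Nat.lt_succ_iff_lt_or_eq.1 hi with hi | rfl
    · exact ih hlow i hi
    · exact htop

theorem card_filter_eval_mem_le {ι : Type*} [CommRing R] [IsDomain R] [DecidableEq R]
    {f : R[X]} (hf : 0 < f.natDegree) (A : Finset ι) {g : ι → R} (hg : Set.InjOn g A)
    (S : Finset R) : #{i ∈ A | f.eval (g i) ∈ S} ≤ f.natDegree * #S := by
  have hne (β : R) : f - C β ≠ 0 := fun h0 => by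
    have := natDegree_sub_C (p := f) (a := β)
    rw [h0, natDegree_zero] at this
    omega
  calc #{i ∈ A | f.eval (g i) ∈ S}
      ≤ #(S.biUnion fun β => (f - C β).roots.toFinset) := by
        refine card_le_card_of_injOn g (fun i hi => ?_) (hg.mono (coe_subset.2 (filter_subset _ _)))
        simp only [coe_filter, Set.mem_ofPred_eq] at hi
        simp only [coe_biUnion, Set.mem_iUnion, mem_coe, Multiset.mem_toFinset]
        exact ⟨_, hi.2, (mem_roots (hne _)).2 (by simp)⟩
    _ ≤ ∑ β ∈ S, #(f - C β).roots.toFinset := card_biUnion_le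
    _ ≤ ∑ _β ∈ S, f.natDegree := sum_le_sum fun β _ =>
        (Multiset.toFinset_card_le _).trans ((card_roots' _).trans natDegree_sub_C.le)
    _ = f.natDegree * #S := by rw [sum_const, smul_eq_mul, mul_comm]

end Polynomial

structure IsBRW {R : Type*} [Semiring R] (B : List R → R[X]) : Prop where
  nil : B [] = 0
  singleton (a : R) : B [a] = C a
  pair (a b : R) : B [a, b] = C a * X + C b
  triple (a b c : R) : B [a, b, c] = (X + C a) * (X ^ 2 + C b) + C c
  split (l : List R) (hl : 4 ≤ l.length) : B l = B (l.take (2 ^ Nat.log 2 l.length - 1)) *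
      (X ^ 2 ^ Nat.log 2 l.length + C (l.getD (2 ^ Nat.log 2 l.length - 1) 0)) +
    B (l.drop (2 ^ Nat.log 2 l.length))

namespace IsBRW

variable {R : Type*}

section Semiring

variable [Semiring R] {B : List R → R[X]}

theorem exists_split (hB : IsBRW B) {l : List R} (h4 : 4 ≤ l.length) :
    ∃ t, 2 ≤ t ∧ 2 ^ t ≤ l.length ∧ l.length < 2 ^ (t + 1) ∧
      ∀ l' : List R, l'.length = l.length →
        B l' = B (l'.take (2 ^ t - 1)) * (X ^ 2 ^ t + C (l'.getD (2 ^ t - 1) 0)) +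
          B (l'.drop (2 ^ t)) :=
  ⟨_, Nat.le_log_of_pow_le one_lt_two h4, Nat.pow_log_le_self 2 (by omega),
    Nat.lt_pow_succ_log_self one_lt_two _, fun l' hl' => hl' ▸ hB.split l' (hl' ▸ h4)⟩

theorem natDegree_le_length (hB : IsBRW B) {l : List R} (hl : l.length ≤ 3) :
    (B l).natDegree ≤ l.length := by
  match l, hl with
  | [], _ => simp [hB.nil]
  | [a], _ => simp [hB.singleton]
  | [a, b], _ => rw [hB.pair]; compute_degree; simp
  | [a, b, c], _ => rw [hB.triple]; compute_degree; simp

theorem natDegree_lt (hB : IsBRW B) {t : ℕ} {l : List R} (hl : l.length < 2 ^ t) :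
    (B l).natDegree < 2 ^ t := by
  induction' hs : l.length using Nat.strong_induction_on with s ih generalizing l t
  subst hs
  rcases le_or_gt l.length 3 with h3 | h4
  · exact (hB.natDegree_le_length h3).trans_lt hl
  obtain ⟨u, hu2, hul, hlu, hsplit⟩ := hB.exists_split h4
  have hut : u + 1 ≤ t := (Nat.pow_lt_pow_iff_right one_lt_two).1 (hul.trans_lt hl)
  have hA := ih _ (by grind) (t := u) (l := l.take (2 ^ u - 1)) (by grind) rfl
  have hD := ih _ (by grind) (t := u) (l := l.drop (2 ^ u)) (by grind) rfl
  have hut' := Nat.pow_le_pow_right two_pos hut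
  have hX : (X ^ 2 ^ u + C (l.getD (2 ^ u - 1) 0)).natDegree ≤ 2 ^ u := by compute_degree
  rw [hsplit l rfl, pow_succ] at *
  refine (natDegree_add_le_of_degree_le (natDegree_mul_le_of_le (Nat.le_sub_one_of_lt hA) hX)
    (hD.le.trans (Nat.le_add_left _ _))).trans_lt ?_
  omega

end Semiring

section Ring

variable [CommRing R] {B : List R → R[X]}

theorem eq_of_length_le_three (hB : IsBRW B) {l l' : List R} (hlen : l.length = l'.length)
    (h3 : l.length ≤ 3) (h : B l = B l') : l = l' := by
  match l, l', h3, hlen with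
  | [], [], _, _ => rfl
  | [a], [a'], _, _ =>
    rw [hB.singleton, hB.singleton, C_inj] at h
    rw [h]
  | [a, b], [a', b'], _, _ =>
    rw [hB.pair, hB.pair] at h
    have h1 := congrArg (coeff · 1) h
    have h0 := congrArg (coeff · 0) h
    simp only [coeff_add, coeff_mul_X, coeff_C_zero, coeff_C_succ, add_zero, mul_coeff_zero,
      coeff_X_zero, mul_zero, zero_add] at h1 h0
    rw [h1, h0]
  | [a, b, c], [a', b', c'], _, _ =>
    have hexp (u v w : R) : (X + C u) * (X ^ 2 + C v) + C w =
        X ^ 3 + C u * X ^ 2 + C v * X + C (u * v + w) := by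
      simp only [C_add, C_mul]; ring
    rw [hB.triple, hB.triple, hexp, hexp] at h
    have h2 := congrArg (coeff · 2) h
    have h1 := congrArg (coeff · 1) h
    have h0 := congrArg (coeff · 0) h
    simp only [coeff_add, coeff_X_pow, coeff_C_mul, coeff_mul_X, coeff_C, coeff_X, mul_coeff_zero,
      Nat.reduceEqDiff, ↓reduceIte, OfNat.one_ne_ofNat, OfNat.zero_ne_ofNat,
      one_ne_zero, mul_one, mul_zero, zero_add, add_zero] at h2 h1 h0
    subst h2 h1
    rw [add_left_cancel h0]

variable [Nontrivial R]

theorem isMonicOfDegree (hB : IsBRW B) {t : ℕ} {l : List R} (h3 : 3 ≤ l.length)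
    (ht : 2 ^ t ≤ l.length) (hl : l.length < 2 ^ (t + 1)) :
    IsMonicOfDegree (B l) (2 ^ (t + 1) - 1) := by
  induction' hs : l.length using Nat.strong_induction_on with s ih generalizing l t
  subst hs
  rcases h3.eq_or_lt with h3 | h4
  · have ht1 : t = 1 := by
      have := (Nat.pow_lt_pow_iff_right one_lt_two (n := t) (m := 2)).1 (by omega)
      have := (Nat.pow_lt_pow_iff_right one_lt_two (n := 1) (m := t + 1)).1 (by omega)
      omega
    subst ht1
    match l, h3 with
    | [a, b, c], _ =>
      rw [hB.triple]
      exact ⟨by compute_degree!, by monicity!⟩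
  obtain ⟨u, hu2, hul, hlu, hsplit⟩ := hB.exists_split h4
  have hut : u = t := by
    have := (Nat.pow_lt_pow_iff_right one_lt_two).1 (hul.trans_lt hl)
    have := (Nat.pow_lt_pow_iff_right one_lt_two).1 (ht.trans_lt hlu)
    omega
  subst hut
  have h4u : 4 ≤ 2 ^ u := (Nat.pow_le_pow_right two_pos hu2).trans' (by norm_num)
  have hA := ih _ (by grind) (t := u - 1) (l := l.take (2 ^ u - 1)) (by grind) (by grind)
    (by rw [Nat.sub_add_cancel (by omega)]; grind) rfl
  rw [Nat.sub_add_cancel (by omega)] at hA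
  have hD := hB.natDegree_lt (t := u) (l := l.drop (2 ^ u)) (by grind)
  rw [hsplit l rfl]
  have hX := (isMonicOfDegree_X_pow R (2 ^ u)).add_right
    (q := C (l.getD (2 ^ u - 1) 0)) (by rw [natDegree_C]; positivity)
  convert (hA.mul hX).add_right (hD.trans_le (by omega)) using 1
  rw [pow_succ]
  omega

/-- The middle block of the split is read off this coefficient of `B l`, so the contribution of the
right half to it must depend on the length of that half only. -/
theorem coeff_two_pow_sub_one_eq (hB : IsBRW B) {t : ℕ} (ht : 2 ≤ t) {l l' : List R}
    (hlen : l.length = l'.length) (hl : l.length < 2 ^ t) :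
    (B l).coeff (2 ^ t - 1) = (B l').coeff (2 ^ t - 1) := by
  have ht' : t - 1 + 1 = t := by omega
  by_cases hbig : 3 ≤ l.length ∧ 2 ^ (t - 1) ≤ l.length
  · have hmon := fun l'' : List R => fun h : l''.length = l.length =>
      ht' ▸ hB.isMonicOfDegree (t := t - 1) (l := l'') (by omega) (by omega) (by rw [ht']; omega)
    exact (hmon l rfl).coeff_eq (hmon l' hlen.symm) le_rfl
  · have hsmall : ∀ l'' : List R, l''.length = l.length → (B l'').natDegree < 2 ^ t - 1 := by
      intro l'' h
      have h4t : 4 ≤ 2 ^ t := (Nat.pow_le_pow_right two_pos ht).trans' (by norm_num)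
      rcases Nat.lt_or_ge l.length 3 with h3 | h3
      · have := hB.natDegree_le_length (l := l'') (by omega)
        omega
      · have := hB.natDegree_lt (t := t - 1) (l := l'') (by omega)
        have : 2 * 2 ^ (t - 1) = 2 ^ t := by rw [← pow_succ', ht']
        omega
    rw [coeff_eq_zero_of_natDegree_lt (hsmall l rfl),
      coeff_eq_zero_of_natDegree_lt (hsmall l' hlen.symm)]

theorem injOn_length (hB : IsBRW B) (s : ℕ) : Set.InjOn B {l | l.length = s} := by
  induction s using Nat.strong_induction_on with
  | _ s ih =>
  intro l hl l' hl' h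
  simp only [Set.mem_ofPred_eq] at hl hl'
  rcases le_or_gt s 3 with h3 | h4
  · exact hB.eq_of_length_le_three (by omega) (by omega) h
  obtain ⟨u, hu2, hul, hlu, hsplit⟩ := hB.exists_split (l := l) (by omega)
  have h4u : 4 ≤ 2 ^ u := (Nat.pow_le_pow_right two_pos hu2).trans' (by norm_num)
  have hu : u - 1 + 1 = u := by omega
  have hA (l'' : List R) (h : l''.length = l.length) :
      IsMonicOfDegree (B (l''.take (2 ^ u - 1))) (2 ^ u - 1) :=
    hu ▸ hB.isMonicOfDegree (t := u - 1) (by grind) (by grind) (by rw [hu]; grind)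
  have hD (l'' : List R) (h : l''.length = l.length) :
      (B (l''.drop (2 ^ u))).natDegree < 2 ^ u :=
    hB.natDegree_lt (by grind)
  have hR (l'' : List R) (h : l''.length = l.length) :
      (B (l''.take (2 ^ u - 1)) * C (l''.getD (2 ^ u - 1) 0) + B (l''.drop (2 ^ u))).natDegree
        < 2 ^ u :=
    (natDegree_add_le _ _).trans_lt (max_lt ((natDegree_mul_C_le _ _).trans_lt
      ((hA l'' h).natDegree_eq.trans_lt (by omega))) (hD l'' h))
  rw [hsplit l rfl, hsplit l' (by omega), mul_add, mul_add, add_assoc, add_assoc] at h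
  obtain ⟨htake, hrest⟩ := eq_and_eq_of_mul_X_pow_add_eq (hR l rfl) (hR l' (by omega)) h
  have hlen : l.length = l'.length := by omega
  have htake' : l.take (2 ^ u - 1) = l'.take (2 ^ u - 1) :=
    ih (2 ^ u - 1) (by omega) (by simp; omega) (by simp; omega) htake
  have hM : l.getD (2 ^ u - 1) 0 = l'.getD (2 ^ u - 1) 0 := by
    have hcoeff := congrArg (coeff · (2 ^ u - 1)) hrest
    simp only [coeff_add, coeff_mul_C, htake,
      ((isMonicOfDegree_iff _ _).1 (hA l' hlen.symm)).2, one_mul,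
      hB.coeff_two_pow_sub_one_eq hu2 (l := l.drop (2 ^ u)) (l' := l'.drop (2 ^ u))
        (by simp [hlen]) (by simp; omega)] at hcoeff
    exact add_right_cancel hcoeff
  have hdrop : l.drop (2 ^ u) = l'.drop (2 ^ u) := by
    rw [htake, hM] at hrest
    exact ih (s - 2 ^ u) (by omega) (by simp; omega) (by simp; omega) (add_left_cancel hrest)
  have hsplitList (l'' : List R) (h : l''.length = l.length) :
      l'' = l''.take (2 ^ u - 1) ++ l''.getD (2 ^ u - 1) 0 :: l''.drop (2 ^ u) := by
    have := l''.eq_take_append_getD_cons_drop (i := 2 ^ u - 1) (by omega) 0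
    rwa [Nat.sub_add_cancel (by omega)] at this
  rw [hsplitList l rfl, hsplitList l' hlen.symm, htake', hM, hdrop]

end Ring

end IsBRW

theorem List.forall_mem_map_toNat_lt_two (l : List Bool) : ∀ d ∈ l.map Bool.toNat, d < 2 := by
  simp only [List.mem_map]
  rintro _ ⟨b, -, rfl⟩
  exact b.toNat_lt

theorem blockVal_eq_ofDigits (l : List Bool) :
    blockVal l = Nat.ofDigits 2 (l.reverse.map Bool.toNat) := by
  rw [blockVal, List.foldl_eq_foldr_reverse, Nat.ofDigits_eq_foldr, List.foldr_map]
  simp only [Nat.cast_id, add_comm]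

theorem blockVal_lt (l : List Bool) : blockVal l < 2 ^ l.length := by
  simpa [blockVal_eq_ofDigits] using
    Nat.ofDigits_lt_base_pow_length one_lt_two (List.forall_mem_map_toNat_lt_two l.reverse)

theorem eq_of_blockVal_eq {l l' : List Bool} (hlen : l.length = l'.length)
    (h : blockVal l = blockVal l') : l = l' := by
  rw [blockVal_eq_ofDigits, blockVal_eq_ofDigits] at h
  have := Nat.ofDigits_inj_of_len_eq one_lt_two (by simpa using hlen)
    (List.forall_mem_map_toNat_lt_two _) (List.forall_mem_map_toNat_lt_two _) h
  simpa using List.map_injective_iff.2 (fun a b h => by cases a <;> cases b <;> simp_all) this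

def chunk (n : ℕ) (x : List Bool) (k : ℕ) : List Bool := (x.drop (n * k)).take n

theorem eq_of_chunk_eq {n : ℕ} (hn : 0 < n) {x x' : List Bool} (hlen : x.length = x'.length)
    (h : ∀ k, n * k < x.length → chunk n x k = chunk n x' k) : x = x' := by
  apply List.ext_getElem?
  intro i
  rcases lt_or_ge i x.length with hi | hi
  · have := congrArg (·[i % n]?) (h (i / n) (lt_of_le_of_lt (Nat.mul_div_le i n) hi))
    simpa [chunk, Nat.mod_lt _ hn, Nat.div_add_mod] using this
  · rw [List.getElem?_eq_none hi, List.getElem?_eq_none (hlen ▸ hi)]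

/-! Lane `j` is the paper's block sequence `(M_{j+1}, M_{c+j+1}, …)`, so that `laneShift` is `d`
and `laneSum` is `Q_{c+1}`. -/

def laneLength (n c : ℕ) (x : List Bool) : ℕ := ((x.length + n - 1) / n + c - 1) / c

def laneShift (n c : ℕ) (x : List Bool) : ℕ :=
  if x.length = 0 then 1 else 2 ^ (Nat.log 2 (laneLength n c x) + 1)

def lane (p n c : ℕ) (x : List Bool) (j : ℕ) : List (ZMod p) :=
  (List.range (laneLength n c x)).map fun i => (blockVal (chunk n x (c * i + j)) : ZMod p)

noncomputable def laneSum (p n c : ℕ) (B : List (ZMod p) → (ZMod p)[X]) (x : List Bool) :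
    (ZMod p)[X] :=
  ∑ j ∈ range c, X ^ ((c - 1 - j) * laneShift n c x) * B (lane p n c x j)

theorem decQ_eq (p n c : ℕ) (B : List (ZMod p) → (ZMod p)[X]) (x : List Bool) :
    decQ p n c B x = X * (X * laneSum p n c B x + C (x.length : ZMod p)) := rfl

theorem lt_laneLength {n c k : ℕ} (hn : 0 < n) (hc : 0 < c) {x : List Bool}
    (hk : n * k < x.length) : k / c < laneLength n c x :=
  Nat.lt_add_sub_one_div hc ((Nat.mul_div_le k c).trans_lt (Nat.lt_add_sub_one_div hn hk))

theorem laneLength_eq_zero (n c : ℕ) {x : List Bool} (hx : x.length = 0) :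
    laneLength n c x = 0 := by
  have hn : (n - 1) / n = 0 := Nat.div_eq_zero_iff.2 (by omega)
  rw [laneLength, hx, zero_add, hn, zero_add]
  exact Nat.div_eq_zero_iff.2 (by omega)

@[simp]
theorem length_lane (p n c : ℕ) (x : List Bool) (j : ℕ) :
    (lane p n c x j).length = laneLength n c x := by
  simp [lane]

theorem laneLength_lt_laneShift (n c : ℕ) (x : List Bool) : laneLength n c x < laneShift n c x := by
  unfold laneShift
  split_ifs with hx
  · simp [laneLength_eq_zero n c hx]
  · exact Nat.lt_pow_succ_log_self one_lt_two _

theorem laneShift_mul_le {n c : ℕ} (hn : 0 < n) {x : List Bool} (hx : x.length ≠ 0) :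
    c * laneShift n c x ≤ 2 * ((x.length + n - 1) / n) + 2 * c - 2 := by
  rcases Nat.eq_zero_or_pos c with rfl | hc
  · simp
  have hℓ : 1 ≤ (x.length + n - 1) / n := (Nat.le_div_iff_mul_le hn).2 (by omega)
  have hlane : 0 < laneLength n c x := Nat.div_pos (by omega) hc
  have hlog := Nat.mul_le_mul_left c (Nat.pow_log_le_self 2 hlane.ne')
  have hmul := Nat.mul_div_le ((x.length + n - 1) / n + c - 1) c
  rw [laneShift, if_neg hx, pow_succ, ← mul_assoc]
  unfold laneLength at *
  omega

section

variable {p : ℕ} {B : List (ZMod p) → (ZMod p)[X]}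

theorem IsBRW.natDegree_lane_lt (hB : IsBRW B) (n c : ℕ) (x : List Bool) (j : ℕ) :
    (B (lane p n c x j)).natDegree < laneShift n c x := by
  have h := laneLength_lt_laneShift n c x
  rw [← length_lane p n c x j] at h
  unfold laneShift at h ⊢
  split_ifs at h ⊢
  · exact hB.natDegree_lt (t := 0) h
  · exact hB.natDegree_lt h

theorem IsBRW.natDegree_laneSum_lt (hB : IsBRW B) {n c : ℕ} (hc : 0 < c) (x : List Bool) :
    (laneSum p n c B x).natDegree < c * laneShift n c x := by
  have hd := (hB.natDegree_lane_lt n c x 0).trans_le' (Nat.zero_le _)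
  refine (natDegree_sum_le_of_forall_le _ _ (n := c * laneShift n c x - 1) fun j hj => ?_).trans_lt
    (Nat.sub_lt (Nat.mul_pos hc hd) one_pos)
  have hj : (c - 1 - j) * laneShift n c x + laneShift n c x ≤ c * laneShift n c x := by
    rw [← add_one_mul]
    exact Nat.mul_le_mul_right _ (by rw [mem_range] at hj; omega)
  have := hB.natDegree_lane_lt n c x j
  refine natDegree_mul_le.trans ?_
  have := natDegree_X_pow_le (R := ZMod p) ((c - 1 - j) * laneShift n c x)
  omega

theorem IsBRW.natDegree_decQ_le (hB : IsBRW B) {n c : ℕ} (hn : 0 < n) (hc : 0 < c)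
    (x : List Bool) :
    (decQ p n c B x).natDegree ≤ 2 * ((x.length + n - 1) / n) + 2 * c - 1 := by
  by_cases hx : x.length = 0
  · have : laneSum p n c B x = 0 := by
      simp [laneSum, lane, laneLength_eq_zero n c hx, hB.nil]
    simp [decQ_eq, this, hx]
  · have h1 := hB.natDegree_laneSum_lt hc x (n := n)
    have h2 := laneShift_mul_le (c := c) hn hx
    have : (decQ p n c B x).natDegree ≤ (laneSum p n c B x).natDegree + 2 := by
      rw [decQ_eq]; compute_degree; omega
    omega

theorem coeff_zero_decQ (p n c : ℕ) (B : List (ZMod p) → (ZMod p)[X]) (x : List Bool) :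
    (decQ p n c B x).coeff 0 = 0 := by
  simp [decQ_eq]

theorem coeff_one_decQ (p n c : ℕ) (B : List (ZMod p) → (ZMod p)[X]) (x : List Bool) :
    (decQ p n c B x).coeff 1 = x.length := by
  simp [decQ_eq, coeff_X]

theorem IsBRW.eq_of_decQ_eq [Fact p.Prime] (hB : IsBRW B) {n c : ℕ} (hn : 0 < n) (hc : 0 < c)
    (hnp : 2 ^ n ≤ p) {x x' : List Bool} (hx : x.length < p) (hx' : x'.length < p)
    (h : decQ p n c B x = decQ p n c B x') : x = x' := by
  have hlen : x.length = x'.length := by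
    simpa [coeff_one_decQ, ZMod.val_natCast_of_lt hx, ZMod.val_natCast_of_lt hx'] using
      congrArg (fun q => (q.coeff 1).val) h
  have hlaneLength : laneLength n c x' = laneLength n c x := by simp only [laneLength, hlen]
  have hshift : laneShift n c x' = laneShift n c x := by simp only [laneShift, laneLength, hlen]
  have hsum : laneSum p n c B x = laneSum p n c B x' := by
    rw [decQ_eq, decQ_eq, hlen] at h
    exact mul_left_cancel₀ X_ne_zero (add_right_cancel (mul_left_cancel₀ X_ne_zero h))
  have hlane (j : ℕ) (hj : j < c) : lane p n c x j = lane p n c x' j := by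
    rw [laneSum, laneSum, hshift] at hsum
    exact hB.injOn_length (laneLength n c x) (length_lane ..)
      (by simp [hlaneLength]) (eq_of_sum_X_pow_mul_eq (hB.natDegree_lane_lt n c x)
        (hshift ▸ hB.natDegree_lane_lt n c x') hsum j hj)
  refine eq_of_chunk_eq hn hlen fun k hk => ?_
  have hk' := lt_laneLength hn hc hk
  have hval := congrArg (·[k / c]?) (hlane (k % c) (Nat.mod_lt k hc))
  simp only [lane, hlaneLength, List.getElem?_map, List.getElem?_range hk', Nat.div_add_mod,
    Option.map_some, Option.some_inj] at hval
  have hlt (y : List Bool) : blockVal (chunk n y k) < p :=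
    (blockVal_lt _).trans_le ((Nat.pow_le_pow_right two_pos (List.length_take_le _ _)).trans hnp)
  refine eq_of_blockVal_eq (by simp [chunk, hlen]) ?_
  simpa [ZMod.val_natCast_of_lt (hlt x), ZMod.val_natCast_of_lt (hlt x')] using
    congrArg ZMod.val hval

theorem IsBRW.natDegree_decQ_sub_pos [Fact p.Prime] (hB : IsBRW B) {n c : ℕ} (hn : 0 < n)
    (hc : 0 < c) (hnp : 2 ^ n ≤ p) {x x' : List Bool} (hx : x.length < p) (hx' : x'.length < p)
    (hne : x ≠ x') : 0 < (decQ p n c B x - decQ p n c B x').natDegree := by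
  refine Nat.pos_of_ne_zero fun h0 =>
    sub_ne_zero.2 (fun h => hne (hB.eq_of_decQ_eq hn hc hnp hx hx' h)) ?_
  rw [eq_C_of_natDegree_eq_zero h0]
  simp [coeff_zero_decQ]

theorem IsBRW.natDegree_decQ_sub_le (hB : IsBRW B) {n c : ℕ} (hn : 0 < n) (hc : 0 < c)
    {x x' : List Bool} (hlen : x'.length ≤ x.length) :
    (decQ p n c B x - decQ p n c B x').natDegree ≤ 2 * ((x.length + n - 1) / n) + 2 * c - 1 := by
  have := Nat.div_le_div_right (c := n) (show x'.length + n - 1 ≤ x.length + n - 1 by omega)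
  exact (natDegree_sub_le _ _).trans (max_le (hB.natDegree_decQ_le hn hc x)
    ((hB.natDegree_decQ_le hn hc x').trans (by omega)))

/-- Where `a - b` lies when the canonical lifts of `a b : ZMod p` differ by `α` modulo `M`. -/
noncomputable def liftDiffSet (p M : ℕ) (α : ZMod M) : Finset (ZMod p) :=
  {w ∈ Ioo (-(p : ℤ)) p | ((w : ℤ) : ZMod M) = α}.image (↑)

theorem sub_mem_liftDiffSet [NeZero p] {M : ℕ} {α : ZMod M} {a b : ZMod p}
    (h : (a.val : ZMod M) - b.val = α) : a - b ∈ liftDiffSet p M α := by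
  have ha := a.val_lt
  have hb := b.val_lt
  refine mem_image.2 ⟨(a.val : ℤ) - b.val, mem_filter.2 ⟨mem_Ioo.2 ⟨by omega, by omega⟩, ?_⟩, ?_⟩
  · push_cast; exact h
  · push_cast; simp

theorem card_liftDiffSet_le {M q : ℕ} (α : ZMod M) (h : 2 * p ≤ M * q) :
    #(liftDiffSet p M α) ≤ q := by
  have h' : 2 * (p : ℤ) ≤ M * q := by exact_mod_cast h
  refine card_image_le.trans ((card_le_card (filter_subset_filter _ fun w hw => ?_)).trans
    (Int.card_filter_Ico_intCast_eq_le (-p) M q α))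
  simp only [mem_Ioo, mem_Ico] at hw ⊢
  omega

theorem card_filter_val_sub_eq_le [Fact p.Prime] {f g : (ZMod p)[X]}
    (hfg : 0 < (f - g).natDegree) {M q K : ℕ} (α : ZMod M) (hq : 2 * p ≤ M * q) (hK : K ≤ p) :
    #{t ∈ range K | ((f.eval ((t : ℕ) : ZMod p)).val : ZMod M) - (g.eval (t : ZMod p)).val = α} ≤
      (f - g).natDegree * q := calc
  _ ≤ #{t ∈ range K | (f - g).eval ((t : ℕ) : ZMod p) ∈ liftDiffSet p M α} :=
      card_le_card (monotone_filter_right _ fun t _ ht => by simpa using sub_mem_liftDiffSet ht)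
  _ ≤ (f - g).natDegree * #(liftDiffSet p M α) :=
      card_filter_eval_mem_le hfg _ ((ZMod.natCast_injOn_Iio p).mono fun t ht => by
        simp only [coe_range, Set.mem_Iio] at ht ⊢; omega) _
  _ ≤ (f - g).natDegree * q := Nat.mul_le_mul_left _ (card_liftDiffSet_le α hq)

end

theorem decBRWHash_axu_bound_general (m δ μ k p n c : ℕ) (hp : p.Prime)
    (hpm : p = 2 ^ m - δ) (hμm : μ < m) (hδ : δ < 2 ^ μ - 1)
    (hkp : 2 ^ k ≤ p) (hn : 0 < n) (hnm : n < m) (hc : 0 < c)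
    (BRW : List (ZMod p) → Polynomial (ZMod p))
    (hB0 : BRW [] = 0)
    (hB1 : ∀ a : ZMod p, BRW [a] = Polynomial.C a)
    (hB2 : ∀ a b : ZMod p, BRW [a, b] = Polynomial.C a * Polynomial.X + Polynomial.C b)
    (hB3 : ∀ a b c' : ZMod p, BRW [a, b, c'] =
      (Polynomial.X + Polynomial.C a) * (Polynomial.X ^ 2 + Polynomial.C b) + Polynomial.C c')
    (hBrec : ∀ l : List (ZMod p), 4 ≤ l.length →
      BRW l = BRW (l.take (2 ^ Nat.log 2 l.length - 1)) *
        (Polynomial.X ^ (2 ^ Nat.log 2 l.length) +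
          Polynomial.C (l.getD (2 ^ Nat.log 2 l.length - 1) 0)) +
        BRW (l.drop (2 ^ Nat.log 2 l.length)))
    (X X' : List Bool) (hXX' : X ≠ X')
    (hL : X.length < 2 ^ (m - 1)) (hL' : X'.length < 2 ^ (m - 1))
    (hLL : X'.length ≤ X.length) (α : ZMod (2 ^ μ)) :
    (c = 1 →
      (((Finset.range (2 ^ k)).filter fun t : ℕ =>
          decBRWHash p μ n c BRW (t : ZMod p) X - decBRWHash p μ n c BRW (t : ZMod p) X'
            = α).card : ℝ) / (2 ^ k : ℝ)
        ≤ (2 * ((X.length + n - 1) / n) + 1 : ℕ) * (2 : ℝ) ^ ((m : ℤ) - k - μ + 1)) ∧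
    (1 < c →
      (((Finset.range (2 ^ k)).filter fun t : ℕ =>
          decBRWHash p μ n c BRW (t : ZMod p) X - decBRWHash p μ n c BRW (t : ZMod p) X'
            = α).card : ℝ) / (2 ^ k : ℝ)
        < (2 * ((X.length + n - 1) / n) + 2 * c + 1 : ℕ) * (2 : ℝ) ^ ((m : ℤ) - k - μ + 1)) := by
  have := Fact.mk hp
  have hB : IsBRW BRW := ⟨hB0, hB1, hB2, hB3, hBrec⟩
  have hmp : 2 ^ (m - 1) < p := by
    have := Nat.pow_le_pow_right two_pos (show μ ≤ m - 1 by omega)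
    have : 2 ^ m = 2 * 2 ^ (m - 1) := by rw [← pow_succ']; congr 1; omega
    omega
  have hnp : 2 ^ n ≤ p := (Nat.pow_le_pow_right two_pos (by omega)).trans hmp.le
  have hq : 2 * p ≤ 2 ^ μ * 2 ^ (m + 1 - μ) := by
    rw [← pow_add, Nat.add_sub_cancel' (by omega), pow_succ]
    omega
  have hcount : #{t ∈ range (2 ^ k) | decBRWHash p μ n c BRW ((t : ℕ) : ZMod p) X -
      decBRWHash p μ n c BRW (t : ZMod p) X' = α} ≤
      (2 * ((X.length + n - 1) / n) + 2 * c - 1) * 2 ^ (m + 1 - μ) :=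
    (card_filter_val_sub_eq_le (hB.natDegree_decQ_sub_pos hn hc hnp (hL.trans hmp)
      (hL'.trans hmp) hXX') α hq hkp).trans
      (Nat.mul_le_mul_right _ (hB.natDegree_decQ_sub_le hn hc hLL))
  have hzpow : (2 : ℝ) ^ ((m : ℤ) - k - μ + 1) = 2 ^ (m + 1 - μ) / 2 ^ k := by
    rw [← zpow_natCast, ← zpow_natCast, ← zpow_sub₀ two_ne_zero]
    congr 1
    omega
  rw [hzpow, ← mul_div_assoc, ← mul_div_assoc]
  refine ⟨fun hc1 => div_le_div_of_nonneg_right ?_ (by positivity),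
    fun hc1 => div_lt_div_of_pos_right ?_ (by positivity)⟩
  · exact_mod_cast hcount.trans (Nat.mul_le_mul_right _ (by omega))
  · exact_mod_cast hcount.trans_lt (Nat.mul_lt_mul_of_pos_right (by omega) (by positivity))

/-- AXU bound for `c-decBRWHash`: for distinct messages `X, X'` of lengths `L ≥ L' ≥ 0`
(both `< 2^(m−1)`), `α ∈ Z_{2^μ}`, `ℓ = ⌈L/n⌉`, and `τ` uniform over `k`-bit strings,
the differential probability is `≤ (2ℓ+1)·2^(m−k−μ+1)` when `c = 1`, and
`< (2ℓ+2c+1)·2^(m−k−μ+1)` when `c > 1`. -/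
theorem decBRWHash_axu_bound (m δ μ k p n c : ℕ) [NeZero p] (hp : p.Prime)
    (hpm : p = 2 ^ m - δ) (hμ0 : 0 < μ) (hμm : μ < m) (hδ : δ < 2 ^ μ - 1)
    (hk : 0 < k) (hkp : 2 ^ k ≤ p) (hn : 0 < n) (hnm : n < m) (hc : 0 < c)
    (BRW : List (ZMod p) → Polynomial (ZMod p))
    (hB0 : BRW [] = 0)
    (hB1 : ∀ a : ZMod p, BRW [a] = Polynomial.C a)
    (hB2 : ∀ a b : ZMod p, BRW [a, b] = Polynomial.C a * Polynomial.X + Polynomial.C b)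
    (hB3 : ∀ a b c' : ZMod p, BRW [a, b, c'] =
      (Polynomial.X + Polynomial.C a) * (Polynomial.X ^ 2 + Polynomial.C b) + Polynomial.C c')
    (hBrec : ∀ l : List (ZMod p), 4 ≤ l.length →
      BRW l = BRW (l.take (2 ^ Nat.log 2 l.length - 1)) *
        (Polynomial.X ^ (2 ^ Nat.log 2 l.length) +
          Polynomial.C (l.getD (2 ^ Nat.log 2 l.length - 1) 0)) +
        BRW (l.drop (2 ^ Nat.log 2 l.length)))
    (X X' : List Bool) (hXX' : X ≠ X')
    (hL : X.length < 2 ^ (m - 1)) (hL' : X'.length < 2 ^ (m - 1))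
    (hLL : X'.length ≤ X.length) (α : ZMod (2 ^ μ)) :
    (c = 1 →
      (((Finset.range (2 ^ k)).filter fun t : ℕ =>
          decBRWHash p μ n c BRW (t : ZMod p) X - decBRWHash p μ n c BRW (t : ZMod p) X'
            = α).card : ℝ) / (2 ^ k : ℝ)
        ≤ (2 * ((X.length + n - 1) / n) + 1 : ℕ) * (2 : ℝ) ^ ((m : ℤ) - k - μ + 1)) ∧
    (1 < c →
      (((Finset.range (2 ^ k)).filter fun t : ℕ =>
          decBRWHash p μ n c BRW (t : ZMod p) X - decBRWHash p μ n c BRW (t : ZMod p) X'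
            = α).card : ℝ) / (2 ^ k : ℝ)
        < (2 * ((X.length + n - 1) / n) + 2 * c + 1 : ℕ) * (2 : ℝ) ^ ((m : ℤ) - k - μ + 1)) :=
  decBRWHash_axu_bound_general m δ μ k p n c hp hpm hμm hδ hkp hn hnm hc BRW hB0 hB1 hB2 hB3 hBrec X
    X' hXX' hL hL' hLL α
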